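/- arXiv:1801.09155 — 6 statements merged into one kernel-verified Lean document; each statement's English description precedes it below -/
import Mathlib

section
/- Let C ⊆ ℝⁿ be a nonempty compact convex set such that h_C(w) ∈ ℤ for every w ∈ ℤⁿ, where h_C is the support function of C. Then C equals its integer hull C_I := conv(C ∩ ℤⁿ). -/
open Finset

namespace S1
variable {n : ℕ}
noncomputable def lin (v y : Fin n → ℝ) : ℝ := ∑ i, v i * y i
lemma lin_cont (v : Fin n → ℝ) : Continuous (lin v) := by
  unfold lin
  exact continuous_finset_sum _ fun i _ => (continuous_const.mul (continuous_apply i))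
lemma lin_combo (a b y : Fin n → ℝ) (c : ℝ) :
    lin (fun i => a i + c * b i) y = lin a y + c * lin b y := by
  unfold lin
  rw [Finset.mul_sum, ← Finset.sum_add_distrib]
  exact Finset.sum_congr rfl fun i _ => by ring
lemma lin_right (v x y : Fin n → ℝ) (a b : ℝ) :
    lin v (a • x + b • y) = a * lin v x + b * lin v y := by
  unfold lin
  rw [Finset.mul_sum, Finset.mul_sum, ← Finset.sum_add_distrib]
  exact Finset.sum_congr rfl fun i _ => by simp [Pi.add_apply]; ring
noncomputable def sup (C : Set (Fin n → ℝ)) (v : Fin n → ℝ) : ℝ := sSup (lin v '' C)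
def Good (C : Set (Fin n → ℝ)) : Prop :=
  C.Nonempty ∧ Convex ℝ C ∧ IsCompact C ∧
    ∀ w : Fin n → ℤ, ∃ z : ℤ, sup C (fun i => (w i : ℝ)) = (z : ℝ)
lemma sup_attained {C : Set (Fin n → ℝ)} (hne : C.Nonempty) (hc : IsCompact C)
    (v : Fin n → ℝ) : ∃ x ∈ C, lin v x = sup C v := by
  obtain ⟨x, hxC, hmax⟩ := hc.exists_isMaxOn hne (lin_cont v).continuousOn
  refine ⟨x, hxC, le_antisymm ?_ ?_⟩
  · exact le_csSup ((hc.image (lin_cont v)).bddAbove) ⟨x, hxC, rfl⟩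
  · exact csSup_le (hne.image _) (by rintro _ ⟨y, hy, rfl⟩; exact hmax hy)
lemma le_sup {C : Set (Fin n → ℝ)} (hc : IsCompact C) (v : Fin n → ℝ)
    {y : Fin n → ℝ} (hy : y ∈ C) : lin v y ≤ sup C v :=
  le_csSup ((hc.image (lin_cont v)).bddAbove) ⟨y, hy, rfl⟩
lemma sup_le' {C : Set (Fin n → ℝ)} (hne : C.Nonempty) {v : Fin n → ℝ} {a : ℝ}
    (h : ∀ y ∈ C, lin v y ≤ a) : sup C v ≤ a :=
  csSup_le (hne.image _) (by rintro _ ⟨y, hy, rfl⟩; exact h y hy)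

lemma face_good {C : Set (Fin n → ℝ)} (hC : Good C) (w : Fin n → ℤ) :
    Good {x ∈ C | lin (fun i => (w i : ℝ)) x = sup C (fun i => (w i : ℝ))} := by
  obtain ⟨hne, hconv, hcomp, hZ⟩ := hC
  set W : Fin n → ℝ := fun i => (w i : ℝ) with hW
  set M : ℝ := sup C W with hM
  set F : Set (Fin n → ℝ) := {x ∈ C | lin W x = M} with hF
  have hFC : F ⊆ C := fun x hx => hx.1
  have hFne : F.Nonempty := by
    obtain ⟨x, hx, hx2⟩ := sup_attained hne hcomp W
    exact ⟨x, hx, hx2⟩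
  have hFcl : IsClosed F := by
    have : F = C ∩ (lin W ⁻¹' {M}) := by ext x; simp [hF, Set.mem_sep_iff, and_comm]
    rw [this]
    exact hcomp.isClosed.inter ((isClosed_singleton).preimage (lin_cont W))
  have hFcp : IsCompact F := hcomp.of_isClosed_subset hFcl hFC
  have hFcv : Convex ℝ F := by
    intro x hx y hy a b ha hb hab
    refine ⟨hconv hx.1 hy.1 ha hb hab, ?_⟩
    rw [lin_right, hx.2, hy.2, ← add_mul, hab, one_mul]

  refine ⟨hFne, hFcv, hFcp, ?_⟩
  intro u
  set U : Fin n → ℝ := fun i => (u i : ℝ) with hU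
  -- integer values of the perturbed support function
  have hg : ∀ t : ℕ, ∃ z : ℤ, sup C (fun i => U i + (t : ℝ) * W i) = (z : ℝ) + t * M := by
    intro t
    obtain ⟨z, hz⟩ := hZ (u + (t : ℤ) • w)
    obtain ⟨Mz, hMz⟩ := hZ w
    have hv : (fun i => (((u + (t:ℤ) • w) i : ℤ) : ℝ)) = fun i => U i + (t:ℝ) * W i := by
      funext i; simp [hU, hW]
    rw [hv] at hz
    refine ⟨z - t * Mz, ?_⟩
    rw [hz]
    have : M = (Mz : ℝ) := hMz
    rw [this]; push_cast; ring
  choose g hgs using hg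
  -- g is antitone
  have hmono : ∀ t : ℕ, g (t+1) ≤ g t := by
    intro t
    have h1 : sup C (fun i => U i + ((t:ℝ)+1) * W i) ≤ sup C (fun i => U i + (t:ℝ) * W i) + M := by
      apply sup_le' hne
      intro y hy
      have e1 : lin (fun i => U i + ((t:ℝ)+1) * W i) y
          = lin (fun i => U i + (t:ℝ) * W i) y + lin W y := by
        rw [lin_combo U W y ((t:ℝ)+1), lin_combo U W y (t:ℝ)]; ring
      rw [e1]
      have := le_sup hcomp (fun i => U i + (t:ℝ) * W i) hy
      have := le_sup hcomp W hy
      have hM' : lin W y ≤ M := by rw [hM]; exact le_sup hcomp W hy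
      linarith [le_sup hcomp (fun i => U i + (t:ℝ) * W i) hy]
    have e2 := hgs (t+1)
    have e3 := hgs t
    rw [show ((t+1 : ℕ) : ℝ) = (t:ℝ)+1 by push_cast; ring] at e2
    rw [e2, e3] at h1
    have : (g (t+1) : ℝ) ≤ (g t : ℝ) := by linarith
    exact_mod_cast this
  have hanti : ∀ s t : ℕ, s ≤ t → g t ≤ g s := by
    intro s t hst
    induction t with
    | zero => simp_all
    | succ t ih =>
      rcases Nat.lt_or_ge s (t+1) with h | h
      · exact le_trans (hmono t) (ih (Nat.lt_succ_iff.mp h))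
      · have : s = t + 1 := le_antisymm hst h
        simp [this]
  -- bounded below
  obtain ⟨x₀, hx₀⟩ := id hFne
  have hlb : ∀ t : ℕ, lin U x₀ ≤ (g t : ℝ) := by
    intro t
    have h1 : lin (fun i => U i + (t:ℝ) * W i) x₀ ≤ sup C (fun i => U i + (t:ℝ) * W i) :=
      le_sup hcomp _ hx₀.1
    rw [hgs t, lin_combo U W x₀ (t:ℝ), hx₀.2] at h1
    linarith
  -- least value m of g, attained at T, constant afterwards
  have hbdd : ∃ b : ℤ, ∀ z : ℤ, (∃ t, g t = z) → b ≤ z := by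
    refine ⟨⌊lin U x₀⌋, ?_⟩
    rintro z ⟨t, rfl⟩
    have h2 : (⌊lin U x₀⌋ : ℝ) ≤ (g t : ℝ) := le_trans (Int.floor_le _) (hlb t)
    exact_mod_cast h2
  obtain ⟨m, ⟨T, hT⟩, hmin⟩ := Int.exists_least_of_bdd hbdd ⟨g 0, 0, rfl⟩
  have hconst : ∀ t, T ≤ t → g t = m := fun t ht =>
    le_antisymm (hT ▸ hanti T t ht) (hmin _ ⟨t, rfl⟩)
  refine ⟨m, le_antisymm ?_ ?_⟩
  · -- sup F U ≤ m
    apply sup_le' hFne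
    intro y hy
    have h1 : lin (fun i => U i + (T:ℝ) * W i) y ≤ sup C (fun i => U i + (T:ℝ) * W i) :=
      le_sup hcomp _ hy.1
    rw [hgs T, hconst T le_rfl, lin_combo U W y (T:ℝ), hy.2] at h1
    linarith
  · -- m ≤ sup F U via nested compact sets
    set K : ℝ := sup C U with hK
    set c : ℕ := ⌈K - (m:ℝ)⌉₊ with hc
    set D : ℕ → Set (Fin n → ℝ) :=
      fun s => {x ∈ C | (m:ℝ) ≤ lin U x ∧ M - 1/((s:ℝ)+1) ≤ lin W x} with hD
    have hDcl : ∀ s, IsClosed (D s) := by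
      intro s
      have : D s = C ∩ ({x | (m:ℝ) ≤ lin U x} ∩ {x | M - 1/((s:ℝ)+1) ≤ lin W x}) := by
        ext x; simp [hD, Set.mem_sep_iff]; tauto
      rw [this]
      exact hcomp.isClosed.inter ((isClosed_le continuous_const (lin_cont U)).inter
        (isClosed_le continuous_const (lin_cont W)))
    have hDC : ∀ s, D s ⊆ C := fun s x hx => hx.1
    have hDne : ∀ s, (D s).Nonempty := by
      intro s
      set t : ℕ := max T (c * (s+1) + 1) with ht
      obtain ⟨x, hxC, hxe⟩ := sup_attained hne hcomp (fun i => U i + (t:ℝ) * W i)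
      rw [hgs t, hconst t (le_max_left _ _), lin_combo U W x (t:ℝ)] at hxe
      have hLM : lin W x ≤ M := le_sup hcomp W hxC
      have hUK : lin U x ≤ K := le_sup hcomp U hxC
      have htpos : (0:ℝ) < (t:ℝ) := by
        have : 1 ≤ t := le_trans (Nat.le_add_left 1 _) (le_max_right _ _)
        exact_mod_cast Nat.lt_of_lt_of_le Nat.zero_lt_one this
      have hmU : (m:ℝ) ≤ lin U x := by nlinarith
      refine ⟨x, hxC, hmU, ?_⟩
      have h1 : (t:ℝ) * (M - lin W x) ≤ K - (m:ℝ) := by nlinarith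
      have h2 : K - (m:ℝ) ≤ (c:ℝ) := Nat.le_ceil _
      have h3 : (c:ℝ) * ((s:ℝ)+1) + 1 ≤ (t:ℝ) := by
        have : c * (s+1) + 1 ≤ t := le_max_right _ _
        exact_mod_cast this
      have hs1 : (0:ℝ) < (s:ℝ)+1 := by positivity
      have key : (M - lin W x) * ((s:ℝ)+1) ≤ 1 := by nlinarith
      have : M - lin W x ≤ 1/((s:ℝ)+1) := by
        rw [le_div_iff₀ hs1]; exact key
      linarith
    have hDsub : ∀ s, D (s+1) ⊆ D s := by
      intro s x hx
      refine ⟨hx.1, hx.2.1, le_trans ?_ hx.2.2⟩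
      have h1 : (0:ℝ) < (s:ℝ)+1 := by positivity
      have : 1/((s:ℝ)+1+1) ≤ 1/((s:ℝ)+1) :=
        one_div_le_one_div_of_le h1 (by linarith)
      have e : ((s:ℝ)+1)+1 = (((s+1:ℕ)):ℝ)+1 := by push_cast; ring
      rw [e] at this
      linarith
    obtain ⟨x, hx⟩ := IsCompact.nonempty_iInter_of_sequence_nonempty_isCompact_isClosed
      D hDsub hDne (hcomp.of_isClosed_subset (hDcl 0) (hDC 0)) hDcl
    have hxs : ∀ s : ℕ, x ∈ D s := by
      intro s; exact Set.mem_iInter.mp hx s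
    have hxC : x ∈ C := (hxs 0).1
    have hxU : (m:ℝ) ≤ lin U x := (hxs 0).2.1
    have hxW : lin W x = M := by
      refine le_antisymm (le_sup hcomp W hxC) ?_
      by_contra h
      push_neg at h
      obtain ⟨s, hs⟩ := exists_nat_one_div_lt (show (0:ℝ) < M - lin W x by linarith)
      have := (hxs s).2.2
      linarith
    exact le_trans hxU (le_sup hFcp U ⟨hxC, hxW⟩)

lemma lin_single (i : Fin n) (y : Fin n → ℝ) :
    lin (fun j => ((Pi.single i 1 : Fin n → ℤ) j : ℝ)) y = y i := by
  unfold lin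
  rw [Finset.sum_eq_single i]
  · simp
  · intro j _ hj; simp [Pi.single_apply, hj]
  · simp

lemma coord_int {C : Set (Fin n → ℝ)} (hne : C.Nonempty) (hcomp : IsCompact C)
    (hZ : ∀ w : Fin n → ℤ, ∃ z : ℤ, sup C (fun i => (w i : ℝ)) = (z : ℝ))
    {x₀ : Fin n → ℝ} (hx₀ : x₀ ∈ C) (i : Fin n)
    (hconst : ∀ x ∈ C, x i = x₀ i) : ∃ k : ℤ, x₀ i = (k : ℝ) := by
  obtain ⟨z, hz⟩ := hZ (Pi.single i 1)
  obtain ⟨x, hxC, hxe⟩ := sup_attained hne hcomp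
    (fun j => ((Pi.single i 1 : Fin n → ℤ) j : ℝ))
  refine ⟨z, ?_⟩
  rw [← hconst x hxC, ← lin_single i x, hxe]
  exact hz

lemma good_int_point_aux : ∀ d : ℕ, ∀ C : Set (Fin n → ℝ),
    Module.finrank ℝ (vectorSpan ℝ C) ≤ d → Good C →
    ∃ x ∈ C, ∀ i, ∃ k : ℤ, x i = (k : ℝ) := by
  intro d
  induction d with
  | zero =>
    intro C hrank hC
    obtain ⟨hne, hconv, hcomp, hZ⟩ := hC
    obtain ⟨x₀, hx₀⟩ := id hne
    have hbot : vectorSpan ℝ C = ⊥ :=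
      Submodule.finrank_eq_zero.mp (Nat.le_zero.mp hrank)
    refine ⟨x₀, hx₀, fun i => ?_⟩
    refine coord_int hne hcomp hZ hx₀ i (fun x hx => ?_)
    have h1 : x -ᵥ x₀ ∈ vectorSpan ℝ C := vsub_mem_vectorSpan ℝ hx hx₀
    rw [hbot, Submodule.mem_bot] at h1
    have : x = x₀ := by
      have := sub_eq_zero.mp h1
      exact this
    rw [this]
  | succ d ih =>
    intro C hrank hC
    obtain ⟨hne, hconv, hcomp, hZ⟩ := id hC
    by_cases hcst : ∃ i : Fin n, ∃ x ∈ C, ∃ y ∈ C, x i ≠ y i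
    · obtain ⟨i, x, hx, y, hy, hxy⟩ := hcst
      set v : Fin n → ℝ := fun j => ((Pi.single i 1 : Fin n → ℤ) j : ℝ) with hv
      set M : ℝ := sup C v with hM
      set F : Set (Fin n → ℝ) := {p ∈ C | lin v p = M} with hF
      have hFgood : Good F := face_good hC (Pi.single i 1)
      have hFC : F ⊆ C := fun p hp => hp.1
      obtain ⟨p, hp⟩ := id hFgood.1
      have hpi : p i = M := by rw [← lin_single i p]; exact hp.2
      have hxM : x i ≤ M := by rw [← lin_single i x]; exact le_sup hcomp v hx
      have hyM : y i ≤ M := by rw [← lin_single i y]; exact le_sup hcomp v hy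
      obtain ⟨q, hqC, hqlt⟩ : ∃ q ∈ C, q i < M := by
        rcases eq_or_lt_of_le hxM with h1 | h1
        · rcases eq_or_lt_of_le hyM with h2 | h2
          · exact absurd (h1.trans h2.symm) hxy
          · exact ⟨y, hy, h2⟩
        · exact ⟨x, hx, h1⟩
      have hle : vectorSpan ℝ F ≤ vectorSpan ℝ C := vectorSpan_mono ℝ hFC
      have hker : vectorSpan ℝ F ≤ LinearMap.ker (LinearMap.proj i :
          (Fin n → ℝ) →ₗ[ℝ] ℝ) := by
        rw [vectorSpan_def]
        rw [Submodule.span_le]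
        rintro u ⟨a, ha, b, hb, rfl⟩
        have hai : a i = M := by rw [← lin_single i a]; exact ha.2
        have hbi : b i = M := by rw [← lin_single i b]; exact hb.2
        simp [LinearMap.mem_ker, hai, hbi]
      have hmem : q - p ∈ vectorSpan ℝ C := vsub_mem_vectorSpan ℝ hqC (hFC hp)
      have hnot : q - p ∉ vectorSpan ℝ F := by
        intro h
        have h2 := hker h
        simp only [LinearMap.mem_ker, LinearMap.proj_apply, Pi.sub_apply] at h2
        rw [hpi] at h2
        linarith
      have hlt : vectorSpan ℝ F < vectorSpan ℝ C :=
        lt_of_le_of_ne hle (fun h => hnot (h ▸ hmem))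
      have hrankF : Module.finrank ℝ (vectorSpan ℝ F) ≤ d := by
        have := Submodule.finrank_lt_finrank_of_lt hlt
        omega
      obtain ⟨z, hzF, hzint⟩ := ih F hrankF hFgood
      exact ⟨z, hFC hzF, hzint⟩
    · push_neg at hcst
      obtain ⟨x₀, hx₀⟩ := id hne
      exact ⟨x₀, hx₀, fun i => coord_int hne hcomp hZ hx₀ i
        (fun x hx => hcst i x hx x₀ hx₀)⟩

lemma good_has_int_point {C : Set (Fin n → ℝ)} (hC : Good C) :
    ∃ x ∈ C, ∀ i, ∃ k : ℤ, x i = (k : ℝ) :=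
  good_int_point_aux (Module.finrank ℝ (vectorSpan ℝ C)) C le_rfl hC

lemma key {C : Set (Fin n → ℝ)} (hC : Good C) (w : Fin n → ℤ) :
    ∃ z ∈ C, (∀ i, ∃ k : ℤ, z i = (k : ℝ)) ∧
      ∀ y ∈ C, lin (fun i => (w i : ℝ)) y ≤ lin (fun i => (w i : ℝ)) z := by
  obtain ⟨z, hzF, hzint⟩ := good_has_int_point (face_good hC w)
  refine ⟨z, hzF.1, hzint, fun y hy => ?_⟩
  rw [hzF.2]
  exact le_sup hC.2.2.1 _ hy
end S1

theorem stmt_1 (n : ℕ) (C : Set (Fin n → ℝ)) (hne : C.Nonempty)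
    (hconv : Convex ℝ C) (hcomp : IsCompact C)
    (hint : ∀ w : Fin n → ℤ, ∃ z : ℤ,
      sSup ((fun y : Fin n → ℝ => ∑ i, (w i : ℝ) * y i) '' C) = (z : ℝ)) :
    C = convexHull ℝ {x ∈ C | ∀ i, ∃ k : ℤ, x i = (k : ℝ)} := by
  have hGood : S1.Good C := ⟨hne, hconv, hcomp, fun w => hint w⟩
  set S : Set (Fin n → ℝ) := {x ∈ C | ∀ i, ∃ k : ℤ, x i = (k : ℝ)} with hS
  obtain ⟨R, hR⟩ := isBounded_iff_forall_norm_le.mp hcomp.isBounded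
  have hSfin : S.Finite := by
    have hsub : S ⊆ (fun k : Fin n → ℤ => (fun i => (k i : ℝ))) ''
        {k : Fin n → ℤ | ∀ i, k i ∈ Set.Icc (-⌈R⌉) ⌈R⌉} := by
      intro x hx
      choose k hk using hx.2
      refine ⟨k, fun i => ?_, by funext i; exact (hk i).symm⟩
      have h1 : |x i| ≤ R := by
        calc |x i| = ‖x i‖ := (Real.norm_eq_abs _).symm
          _ ≤ ‖x‖ := norm_le_pi_norm x i
          _ ≤ R := hR x hx.1
      have h2 : |(k i : ℝ)| ≤ (⌈R⌉ : ℝ) := by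
        rw [← hk i]; exact le_trans h1 (Int.le_ceil R)
      constructor
      · have := neg_le_of_abs_le h2; exact_mod_cast this
      · have := le_of_abs_le h2; exact_mod_cast this
    refine Set.Finite.subset (Set.Finite.image _ ?_) hsub
    have he : {k : Fin n → ℤ | ∀ i, k i ∈ Set.Icc (-⌈R⌉) ⌈R⌉}
        = Set.pi Set.univ (fun _ => Set.Icc (-⌈R⌉) ⌈R⌉) := by
      ext k; simp [Set.mem_pi, Set.mem_Icc, Pi.le_def, forall_and]
    rw [he]
    exact Set.Finite.pi (fun _ => Set.finite_Icc _ _)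
  apply Set.Subset.antisymm ?_ (convexHull_min (Set.sep_subset _ _) hconv)
  intro x hxC
  by_contra hxH
  obtain ⟨f, u, hfu, hux⟩ := geometric_hahn_banach_closed_point
    (convex_convexHull ℝ S) ((hSfin.isCompact_convexHull (𝕜 := ℝ)).isClosed) hxH
  set v₀ : Fin n → ℝ := fun i => f (Pi.single i 1) with hv₀
  have hfl : ∀ y : Fin n → ℝ, f y = S1.lin v₀ y := by
    intro y
    have hsingle : ∀ i : Fin n, (fun j => if i = j then (1:ℝ) else 0) = Pi.single i 1 := by
      intro i; funext j; simp [Pi.single_apply, eq_comm]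
    calc f y = f (∑ i, y i • fun j => if i = j then (1:ℝ) else 0) := by
          rw [← pi_eq_sum_univ y]
      _ = ∑ i, y i * f (fun j => if i = j then (1:ℝ) else 0) := by
          rw [map_sum]; exact Finset.sum_congr rfl fun i _ => by
            rw [map_smul]; simp
      _ = S1.lin v₀ y := by
          unfold S1.lin
          exact Finset.sum_congr rfl fun i _ => by rw [hsingle i, hv₀]; ring
  set δ : ℝ := f x - u with hδdef
  have hδ : 0 < δ := by simp [hδdef]; linarith
  have hsep : ∀ z ∈ S, S1.lin v₀ z + δ < S1.lin v₀ x := by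
    intro z hz
    have h1 : f z < u := hfu z (subset_convexHull ℝ S hz)
    rw [← hfl, ← hfl]
    simp [hδdef] at *
    linarith
  have hR0 : 0 ≤ R := le_trans (norm_nonneg x) (hR x hxC)
  set ε : ℝ := δ / (2 * (n * R + 1)) with hεdef
  have hden : (0:ℝ) < 2 * (n * R + 1) := by positivity
  have hε : 0 < ε := by positivity
  have hkey : ε * (2 * (n * R + 1)) = δ := div_mul_cancel₀ δ (ne_of_gt hden)
  have hq' : ∀ i : Fin n, ∃ q : ℚ, |v₀ i - q| < ε := fun i => exists_rat_near (v₀ i) hε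
  choose q hq using hq'
  have hest : ∀ y ∈ C, |S1.lin (fun i => (q i : ℝ)) y - S1.lin v₀ y| ≤ n * (ε * R) := by
    intro y hy
    have h1 : S1.lin (fun i => (q i : ℝ)) y - S1.lin v₀ y
        = ∑ i, ((q i : ℝ) - v₀ i) * y i := by
      unfold S1.lin
      rw [← Finset.sum_sub_distrib]
      exact Finset.sum_congr rfl fun i _ => by ring
    rw [h1]
    refine le_trans (Finset.abs_sum_le_sum_abs _ _) ?_
    have h2 : ∀ i ∈ Finset.univ, |((q i : ℝ) - v₀ i) * y i| ≤ ε * R := by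
      intro i _
      rw [abs_mul]
      refine mul_le_mul ?_ ?_ (abs_nonneg _) (le_of_lt hε)
      · rw [abs_sub_comm]; exact le_of_lt (hq i)
      · calc |y i| = ‖y i‖ := (Real.norm_eq_abs _).symm
          _ ≤ ‖y‖ := norm_le_pi_norm y i
          _ ≤ R := hR y hy
    refine le_trans (Finset.sum_le_sum h2) ?_
    rw [Finset.sum_const, Finset.card_univ, Fintype.card_fin, nsmul_eq_mul]
  have hhalf : (n:ℝ) * (ε * R) ≤ δ / 2 := by nlinarith [mul_nonneg (mul_nonneg (Nat.cast_nonneg n) hε.le) hR0]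
  have hsepq : ∀ z ∈ S, S1.lin (fun i => (q i : ℝ)) z < S1.lin (fun i => (q i : ℝ)) x := by
    intro z hz
    have h1 := hest z hz.1
    have h2 := hest x hxC
    have h3 := hsep z hz
    have h4 := abs_le.mp h1
    have h5 := abs_le.mp h2
    linarith
  -- scale to integers
  set N : ℤ := ∏ i, ((q i).den : ℤ) with hN
  have hNpos : 0 < N := Finset.prod_pos (fun i _ => by exact_mod_cast (q i).pos)
  have hint_mul : ∀ i : Fin n, ∃ m : ℤ, (q i * N : ℚ) = m := by
    intro i
    have hdvd : ((q i).den : ℤ) ∣ N := Finset.dvd_prod_of_mem _ (Finset.mem_univ i)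
    obtain ⟨c, hc⟩ := hdvd
    refine ⟨(q i).num * c, ?_⟩
    rw [hc]
    push_cast
    rw [← mul_assoc, Rat.mul_den_eq_num]
  choose w hw using hint_mul
  have hwr : ∀ i, (w i : ℝ) = (N : ℝ) * (q i : ℝ) := by
    intro i
    have := congrArg (fun r : ℚ => (r : ℝ)) (hw i)
    push_cast at this
    linarith
  have hlinw : ∀ y : Fin n → ℝ,
      S1.lin (fun i => (w i : ℝ)) y = (N:ℝ) * S1.lin (fun i => (q i : ℝ)) y := by
    intro y
    unfold S1.lin
    rw [Finset.mul_sum]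
    refine Finset.sum_congr rfl fun i _ => ?_
    show (w i : ℝ) * y i = (N:ℝ) * ((q i : ℝ) * y i)
    rw [hwr i]; ring
  obtain ⟨z, hzC, hzint, hzmax⟩ := S1.key hGood w
  have hzS : z ∈ S := ⟨hzC, hzint⟩
  have h1 := hzmax x hxC
  rw [hlinw, hlinw] at h1
  have h2 : (N:ℝ) * S1.lin (fun i => (q i : ℝ)) z < (N:ℝ) * S1.lin (fun i => (q i : ℝ)) x :=
    mul_lt_mul_of_pos_left (hsepq z hzS) (by exact_mod_cast hNpos)
  linarith
end

section
/- Let C ⊆ ℝⁿ be a nonempty compact convex set such that every minimal nonempty face of C contains an integral point. Then for every w ∈ ℝⁿ, the maximum of ⟨w, x⟩ over x ∈ C is attained at some integral point of C. -/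
/-- `F` is a face of the convex set `C`. -/
def IsFaceOf {n : ℕ} (C F : Set (Fin n → ℝ)) : Prop :=
  F ⊆ C ∧ Convex ℝ F ∧
    ∀ x ∈ C, ∀ y ∈ C, (openSegment ℝ x y ∩ F).Nonempty → x ∈ F ∧ y ∈ F

/-- `F` is a minimal (nonempty) face of `C`: it is a nonempty face containing
no other nonempty face. -/
def IsMinimalFaceOf {n : ℕ} (C F : Set (Fin n → ℝ)) : Prop :=
  IsFaceOf C F ∧ F.Nonempty ∧
    ∀ F' : Set (Fin n → ℝ), IsFaceOf C F' → F'.Nonempty → F' ⊆ F → F' = F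

/-!
The maximizers of a linear functional on the compact set `C` form a nonempty compact
exposed, hence extreme, subset of `C`; by the Krein–Milman lemma it has an extreme point `p`, which
is then an extreme point of `C`. A singleton `{p}` with `p` extreme is a face of `C`, and trivially
a minimal one, so by hypothesis `p` itself is integral.
-/

open Set

theorem IsExtreme.isFaceOf {n : ℕ} {C F : Set (Fin n → ℝ)} (hCF : IsExtreme ℝ C F)
    (hF : Convex ℝ F) : IsFaceOf C F := by
  refine ⟨hCF.subset, hF, fun x hx y hy ⟨z, hzxy, hzF⟩ => ?_⟩
  exact ⟨hCF.left_mem_of_mem_openSegment hx hy hzF hzxy,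
    hCF.right_mem_of_mem_openSegment hx hy hzF hzxy⟩

theorem isMinimalFaceOf_singleton {n : ℕ} {C : Set (Fin n → ℝ)} {p : Fin n → ℝ}
    (hp : p ∈ C.extremePoints ℝ) : IsMinimalFaceOf C {p} :=
  ⟨(isExtreme_singleton.2 hp).isFaceOf (convex_singleton p), singleton_nonempty p,
    fun _ _ hF' hF'p => hF'.subset_singleton_iff.1 hF'p⟩

theorem IsCompact.exists_mem_extremePoints_isMaxOn {E : Type*} [AddCommGroup E] [Module ℝ E]
    [TopologicalSpace E] [T2Space E] [IsTopologicalAddGroup E] [ContinuousSMul ℝ E]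
    [LocallyConvexSpace ℝ E] {s : Set E} (hs : IsCompact s) (hne : s.Nonempty)
    (l : StrongDual ℝ E) : ∃ p ∈ s.extremePoints ℝ, IsMaxOn l s p := by
  have hexposed : IsExposed ℝ s (l.toExposed s) := ContinuousLinearMap.toExposed.isExposed
  obtain ⟨z, hzs, hz⟩ := hs.exists_isMaxOn hne l.continuous.continuousOn
  obtain ⟨p, hp⟩ := (hexposed.isCompact hs).extremePoints_nonempty ⟨z, hzs, hz⟩
  exact ⟨p, hexposed.isExtreme.extremePoints_subset_extremePoints hp, hp.1.2⟩

theorem stmt_3_general (n : ℕ) (C : Set (Fin n → ℝ)) (hne : C.Nonempty)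
    (hcomp : IsCompact C)
    (hmin : ∀ F : Set (Fin n → ℝ), IsMinimalFaceOf C F →
      ∃ x ∈ F, ∀ i, ∃ k : ℤ, x i = (k : ℝ)) :
    ∀ w : Fin n → ℝ, ∃ x ∈ C, (∀ i, ∃ k : ℤ, x i = (k : ℝ)) ∧
      ∀ y ∈ C, (∑ i, w i * y i) ≤ ∑ i, w i * x i := by
  intro w
  let l : StrongDual ℝ (Fin n → ℝ) := ∑ i, w i • ContinuousLinearMap.proj i
  have hl : ∀ y, l y = ∑ i, w i * y i := fun y => by simp [l]
  obtain ⟨p, hp, hpmax⟩ := hcomp.exists_mem_extremePoints_isMaxOn hne l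
  obtain ⟨x, rfl, hx⟩ := hmin {p} (isMinimalFaceOf_singleton hp)
  exact ⟨x, hp.1, hx, fun y hy => (hl y).symm.trans_le ((hpmax hy).trans_eq (hl x))⟩

theorem stmt_3 (n : ℕ) (C : Set (Fin n → ℝ)) (hne : C.Nonempty)
    (hconv : Convex ℝ C) (hcomp : IsCompact C)
    (hmin : ∀ F : Set (Fin n → ℝ), IsMinimalFaceOf C F →
      ∃ x ∈ F, ∀ i, ∃ k : ℤ, x i = (k : ℝ)) :
    ∀ w : Fin n → ℝ, ∃ x ∈ C, (∀ i, ∃ k : ℤ, x i = (k : ℝ)) ∧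
      ∀ y ∈ C, (∑ i, w i * y i) ≤ ∑ i, w i * x i :=
  stmt_3_general n C hne hcomp hmin
end

section
/- Let C ⊆ ℝⁿ be a nonempty compact convex set such that max_{x ∈ C} ⟨w, x⟩ ∈ ℤ for every w ∈ ℤⁿ. Then every rational supporting hyperplane of C contains an integral point. -/
/-!
Write a nonzero rational functional as `w = c • u` with `c > 0` and `u` a primitive integral
vector. The support function is positively homogeneous, so `max_C ⟨w, ·⟩ = c · z` where
`z = max_C ⟨u, ·⟩` is an integer by hypothesis. Bézout gives an integral `x` with `⟨u, x⟩ = 1`,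
and then `z • x` is an integral point on the hyperplane `⟨w, ·⟩ = c · z`.
-/

open Finset

lemma exists_pos_nat_mul_eq_int {ι : Type*} [Fintype ι] (w : ι → ℚ) :
    ∃ D : ℕ, 0 < D ∧ ∃ a : ι → ℤ, ∀ i, (a i : ℚ) = D * w i := by
  refine ⟨∏ i, (w i).den, prod_pos fun i _ => (w i).pos,
    fun i => ((∏ j, (w j).den) / (w i).den : ℕ) * (w i).num, fun i => ?_⟩
  have hden : (w i).den ∣ ∏ j, (w j).den := dvd_prod_of_mem _ (mem_univ i)
  rw [Int.cast_mul, Int.cast_natCast, Nat.cast_div_charZero hden, ← Rat.mul_den_eq_num]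
  field_simp

lemma exists_pos_mul_primitive {ι : Type*} [Fintype ι] (w : ι → ℚ) (hw : w ≠ 0) :
    ∃ c : ℚ, 0 < c ∧ ∃ u : ι → ℤ, univ.gcd u = 1 ∧ ∀ i, w i = c * u i := by
  obtain ⟨i₀, hi₀⟩ := Function.ne_iff.mp hw
  obtain ⟨D, hD, a, ha⟩ := exists_pos_nat_mul_eq_int w
  obtain ⟨u, hau, hu⟩ := extract_gcd a ⟨i₀, mem_univ i₀⟩
  have hg : univ.gcd a ≠ 0 := fun h => by
    have : (a i₀ : ℚ) = 0 := by simp [hau i₀ (mem_univ _), h]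
    rw [ha] at this
    exact hi₀ (by simpa [hD.ne'] using this)
  have hg_nonneg : 0 ≤ univ.gcd a := by
    rw [← Finset.normalize_gcd, ← Int.abs_eq_normalize]
    exact abs_nonneg _
  refine ⟨univ.gcd a / D, div_pos (by exact_mod_cast hg_nonneg.lt_of_ne' hg)
    (by exact_mod_cast hD), u, hu, fun i => ?_⟩
  have hai := ha i
  rw [hau i (mem_univ i), Int.cast_mul] at hai
  field_simp
  linarith

lemma Real.sSup_image_const_mul {α : Type*} {c : ℝ} (hc : 0 ≤ c) (f : α → ℝ) (C : Set α) :
    sSup ((fun y => c * f y) '' C) = c * sSup (f '' C) := by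
  rw [← smul_eq_mul, ← Real.sSup_smul_of_nonneg hc, ← Set.image_smul, Set.image_image]
  rfl

theorem stmt_4_general (n : ℕ) (C : Set (Fin n → ℝ))
    (hint : ∀ w : Fin n → ℤ, ∃ z : ℤ,
      sSup ((fun y : Fin n → ℝ => ∑ i, (w i : ℝ) * y i) '' C) = (z : ℝ)) :
    ∀ w : Fin n → ℚ, w ≠ 0 →
      ∃ x : Fin n → ℝ, (∀ i, ∃ k : ℤ, x i = (k : ℝ)) ∧
        (∑ i, (w i : ℝ) * x i) =
          sSup ((fun y : Fin n → ℝ => ∑ i, (w i : ℝ) * y i) '' C) := by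
  intro w hw
  obtain ⟨c, hc, u, hu, hwu⟩ := exists_pos_mul_primitive w hw
  obtain ⟨z, hz⟩ := hint u
  obtain ⟨x, hx⟩ := univ.gcd_eq_sum_mul u
  rw [hu] at hx
  have hlin : ∀ y : Fin n → ℝ, ∑ i, (w i : ℝ) * y i = c * ∑ i, (u i : ℝ) * y i := fun y => by
    simp only [hwu, Rat.cast_mul, Rat.cast_intCast, mul_sum, mul_assoc]
  have hux : ∑ i, (u i : ℝ) * (z * x i : ℤ) = z := by
    have hux_int : ∑ i, u i * (z * x i) = z := by
      simp_rw [mul_left_comm (u _) z, ← mul_sum, ← hx, mul_one]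
    exact_mod_cast hux_int
  refine ⟨fun i => (z * x i : ℤ), fun i => ⟨_, rfl⟩, ?_⟩
  simp only [hlin]
  rw [Real.sSup_image_const_mul (by positivity), hz, hux]

theorem stmt_4 (n : ℕ) (C : Set (Fin n → ℝ)) (hne : C.Nonempty)
    (hconv : Convex ℝ C) (hcomp : IsCompact C)
    (hint : ∀ w : Fin n → ℤ, ∃ z : ℤ,
      sSup ((fun y : Fin n → ℝ => ∑ i, (w i : ℝ) * y i) '' C) = (z : ℝ)) :
    ∀ w : Fin n → ℚ, w ≠ 0 →
      ∃ x : Fin n → ℝ, (∀ i, ∃ k : ℤ, x i = (k : ℝ)) ∧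
        (∑ i, (w i : ℝ) * x i) =
          sSup ((fun y : Fin n → ℝ => ∑ i, (w i : ℝ) * y i) '' C) :=
  stmt_4_general n C hint
end

section
/- Let G = (V, E) be a graph, w : V → ℝ with w_v > 0 for all v. Suppose there exist η ∈ ℝ, u ∈ ℝ^V, z ∈ ℝ₊^V, y ∈ ℝ^{E} ⊕ (−ℝ₊)^{Ē}, and a positive semidefinite matrix Ŝ on index set {0} ∪ V with rank(Ŝ) ≤ 1 satisfying the dual feasibility equation: the (0,0) entry of Ŝ is η, the (0,j) entries are −u_j, and Diag(2u − z − w) + Σ_{ij ∈ binom(V,2)} 2 y_{ij} Sym(e_i e_jᵀ) equals the lower-right V×V block of Ŝ, with η > 0. Then G is the complete graph on V. -/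
open Matrix

lemma rank_le_one_minor {n : Type*} [Fintype n] [DecidableEq n]
    (A : Matrix n n ℝ) (h : A.rank ≤ 1) (a b c d : n) :
    A a b * A c d = A a d * A c b := by
  rw [Matrix.rank, finrank_le_one_iff] at h
  obtain ⟨v, hv⟩ := h
  have hcol : ∀ j : n, ∃ k : ℝ, ∀ i, A i j = k * (v : n → ℝ) i := by
    intro j
    have hmem : (A.mulVec (Pi.single j 1)) ∈ LinearMap.range A.mulVecLin :=
      ⟨Pi.single j 1, rfl⟩
    obtain ⟨c, hc⟩ := hv ⟨_, hmem⟩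
    refine ⟨c, fun i => ?_⟩
    have := congrArg (fun w : LinearMap.range A.mulVecLin => (w : n → ℝ) i) hc
    simp only [Submodule.coe_smul, Pi.smul_apply, smul_eq_mul] at this
    rw [this]
    simp [Matrix.mulVec_single]
  obtain ⟨kb, hkb⟩ := hcol b
  obtain ⟨kd, hkd⟩ := hcol d
  rw [hkb a, hkb c, hkd a, hkd c]
  ring

theorem stmt_7 (V : Type*) [Fintype V] [DecidableEq V] (G : SimpleGraph V)
    (w : V → ℝ) (hw : ∀ v, 0 < w v)
    (η : ℝ) (u : V → ℝ) (z : V → ℝ) (hz : ∀ v, 0 ≤ z v)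
    (y : V → V → ℝ) (hysymm : ∀ i j, y i j = y j i)
    (hy : ∀ i j, i ≠ j → ¬ G.Adj i j → y i j ≤ 0)
    (Shat : Matrix (Option V) (Option V) ℝ)
    (hpsd : Shat.PosSemidef) (hrank : Shat.rank ≤ 1)
    (h00 : Shat none none = η) (hη : 0 < η)
    (h0j : ∀ j, Shat none (some j) = -u j)
    (hdiag : ∀ j, Shat (some j) (some j) = 2 * u j - z j - w j)
    (hoff : ∀ i j, i ≠ j → Shat (some i) (some j) = y i j) :
    ∀ i j : V, i ≠ j → G.Adj i j := by
  -- symmetry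
  have hsymm : ∀ a b, Shat a b = Shat b a := by
    intro a b
    have := congrFun (congrFun hpsd.1.symm a) b
    simpa [Matrix.conjTranspose_apply] using this
  -- u is positive
  have hu : ∀ j, 0 < u j := by
    intro j
    have hd := hpsd.dotProduct_mulVec_nonneg (Pi.single (some j) 1)
    simp [dotProduct, Matrix.mulVec, Pi.single_apply, Finset.mul_sum] at hd
    rw [hdiag j] at hd
    nlinarith [hw j, hz j]
  intro i j hij
  by_contra hadj
  have hyij := hy i j hij hadj
  have key := rank_le_one_minor Shat hrank (some i) (some j) none none
  rw [hoff i j hij, h00, hsymm (some i) none, h0j i, h0j j] at key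
  nlinarith [hu i, hu j]
end

section
/- Let G = (V, E) be a graph with no isolated vertices and w : E → ℝ with w_e ≠ 0 for all e ∈ E. Suppose there exist y ∈ ℝ^V and S ∈ ℝ^{V×V} positive semidefinite with rank(S) ≤ 1 such that S = Diag(y) − (1/4)·L_G(w), where L_G(w) = Σ_{ij ∈ E} w_{ij} (e_i − e_j)(e_i − e_j)ᵀ is the weighted Laplacian. Then G is the complete graph on V, and there exists u : V → ℝ with u_i ≠ 0 for all i such that w_{ij} = u_i u_j for every edge ij. -/
/-!
A positive semidefinite matrix of rank at most one is `u uᴴ`: write it as `Bᴴ B` and factor the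
rank-one matrix `B` as `v cᵀ`. Off the diagonal, `S = Diag(y) - L_G(w)/4` has entries `w i j / 4`,
so `w i j = (2 u i) (2 u j)` for all `i ≠ j`. Every vertex has a neighbour, where `w` is nonzero,
so no `u i` vanishes; hence `w i j ≠ 0` for all `i ≠ j`, which forces every such pair to be an edge.
-/

open Matrix

namespace Matrix

theorem exists_eq_vecMulVec_of_rank_le_one {m n K : Type*} [Fintype n] [Field K]
    {A : Matrix m n K} (hA : A.rank ≤ 1) : ∃ (v : m → K) (c : n → K), A = vecMulVec v c := by
  classical
  obtain ⟨v, hv⟩ := finrank_le_one_iff.mp hA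
  have hcol : ∀ j, ∃ r : K, r • (v : m → K) = A.col j := fun j => by
    obtain ⟨r, hr⟩ := hv ⟨A *ᵥ Pi.single j 1, Pi.single j 1, rfl⟩
    exact ⟨r, by simpa [mulVec_single_one] using congrArg Subtype.val hr⟩
  choose c hc using hcol
  refine ⟨v, c, ext fun i j => ?_⟩
  rw [vecMulVec_apply, mul_comm, ← col_apply A j i, ← hc j, Pi.smul_apply, smul_eq_mul]

open scoped ComplexOrder MatrixOrder in
theorem PosSemidef.exists_eq_vecMulVec_star_of_rank_le_one {n 𝕜 : Type*} [Fintype n] [RCLike 𝕜]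
    {S : Matrix n n 𝕜} (hS : S.PosSemidef) (hrank : S.rank ≤ 1) :
    ∃ u : n → 𝕜, S = vecMulVec u (star u) := by
  classical
  obtain ⟨B, rfl⟩ := CStarAlgebra.nonneg_iff_eq_star_mul_self.mp hS.nonneg
  rw [star_eq_conjTranspose, rank_conjTranspose_mul_self] at hrank
  obtain ⟨v, c, rfl⟩ := exists_eq_vecMulVec_of_rank_le_one hrank
  obtain ⟨x, hx, hvv⟩ := RCLike.nonneg_iff_exists_ofReal.mp (dotProduct_star_self_nonneg v)
  refine ⟨(√x : 𝕜) • star c, ?_⟩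
  rw [star_eq_conjTranspose, conjTranspose_vecMulVec, vecMulVec_mul_vecMulVec, ← hvv, star_smul,
    star_star, RCLike.star_def, RCLike.conj_ofReal, smul_vecMulVec, vecMulVec_smul,
    vecMulVec_smul, smul_smul, ← RCLike.ofReal_mul, Real.mul_self_sqrt hx]

end Matrix

theorem stmt_8_general (V : Type*) [Fintype V] [DecidableEq V] (G : SimpleGraph V)
    (hnoiso : ∀ i : V, ∃ j, G.Adj i j)
    (w : V → V → ℝ)
    (hw0 : ∀ i j, ¬ G.Adj i j → w i j = 0)
    (hwne : ∀ i j, G.Adj i j → w i j ≠ 0)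
    (y : V → ℝ) (S : Matrix V V ℝ)
    (hpsd : S.PosSemidef) (hrank : S.rank ≤ 1)
    (hS : S = Matrix.diagonal y -
      (1/4 : ℝ) • (Matrix.of fun i j =>
        if i = j then ∑ k, w i k else -(w i j))) :
    (∀ i j : V, i ≠ j → G.Adj i j) ∧
      ∃ u : V → ℝ, (∀ i, u i ≠ 0) ∧ ∀ i j, G.Adj i j → w i j = u i * u j := by
  obtain ⟨u, rfl⟩ := hpsd.exists_eq_vecMulVec_star_of_rank_le_one hrank
  have hw : ∀ i j, i ≠ j → w i j = 2 * u i * (2 * u j) := fun i j hij => by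
    have hentry := congrFun₂ hS i j
    simp only [vecMulVec_apply, star_trivial, Matrix.sub_apply, diagonal_apply_ne _ hij,
      Matrix.smul_apply, of_apply, if_neg hij, smul_eq_mul] at hentry
    linarith
  have hu : ∀ i, 2 * u i ≠ 0 := fun i => by
    obtain ⟨j, hij⟩ := hnoiso i
    exact left_ne_zero_of_mul (hw i j hij.ne ▸ hwne i j hij)
  refine ⟨fun i j hij => ?_, fun i => 2 * u i, hu, fun i j hij => hw i j hij.ne⟩
  by_contra hadj
  exact mul_ne_zero (hu i) (hu j) (hw i j hij ▸ hw0 i j hadj)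

theorem stmt_8 (V : Type*) [Fintype V] [DecidableEq V] (G : SimpleGraph V)
    (hnoiso : ∀ i : V, ∃ j, G.Adj i j)
    (w : V → V → ℝ) (hwsymm : ∀ i j, w i j = w j i)
    (hw0 : ∀ i j, ¬ G.Adj i j → w i j = 0)
    (hwne : ∀ i j, G.Adj i j → w i j ≠ 0)
    (y : V → ℝ) (S : Matrix V V ℝ)
    (hpsd : S.PosSemidef) (hrank : S.rank ≤ 1)
    (hS : S = Matrix.diagonal y -
      (1/4 : ℝ) • (Matrix.of fun i j =>
        if i = j then ∑ k, w i k else -(w i j))) :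
    (∀ i j : V, i ≠ j → G.Adj i j) ∧
      ∃ u : V → ℝ, (∀ i, u i ≠ 0) ∧ ∀ i j, G.Adj i j → w i j = u i * u j :=
  stmt_8_general V G hnoiso w hw0 hwne y S hpsd hrank hS
end

section
/- Let G = (V, E) be a graph and m : 𝒫(V) → ℤ₊ a clique cover of G with respect to w : V → ℤ, i.e., m is supported on cliques and Σ_K m_K χ_K ≥ w. Then the matrix Ŝ = Σ_{A ⊆ V} m_A · (−1, χ_A)(−1, χ_A)ᵀ is positive semidefinite, has Ŝ₀₀ = Σ_A m_A, Ŝ_{0j} = −Σ_{A ∋ j} m_A, diagonal entries Ŝ_{jj} = Σ_{A ∋ j} m_A ≥ w_j for j ∈ V, and for every non-edge ij ∉ E its off-diagonal entry Ŝ_{ij} equals 0. -/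
open Matrix Finset

theorem stmt_12 (V : Type*) [Fintype V] [DecidableEq V] (G : SimpleGraph V)
    (w : V → ℤ) (m : Finset V → ℕ)
    (hclique : ∀ A : Finset V, m A ≠ 0 → G.IsClique (A : Set V))
    (hcover : ∀ j : V,
      w j ≤ (∑ A ∈ Finset.univ.filter (fun A : Finset V => j ∈ A), m A : ℕ))
    (v : Finset V → Option V → ℝ)
    (hv0 : ∀ A, v A none = -1)
    (hv : ∀ A (i : V), v A (some i) = if i ∈ A then 1 else 0)
    (Shat : Matrix (Option V) (Option V) ℝ)
    (hS : Shat = ∑ A : Finset V, (m A : ℝ) • Matrix.of fun a b => v A a * v A b) :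
    Shat.PosSemidef ∧
    Shat none none = (∑ A : Finset V, m A : ℕ) ∧
    (∀ j : V, Shat none (some j) =
      -((∑ A ∈ Finset.univ.filter (fun A : Finset V => j ∈ A), m A : ℕ) : ℝ)) ∧
    (∀ j : V, Shat (some j) (some j) =
      ((∑ A ∈ Finset.univ.filter (fun A : Finset V => j ∈ A), m A : ℕ) : ℝ) ∧
      (w j : ℝ) ≤ Shat (some j) (some j)) ∧
    (∀ i j : V, i ≠ j → ¬ G.Adj i j → Shat (some i) (some j) = 0) := by
  have hentry : ∀ a b, Shat a b = ∑ A : Finset V, (m A : ℝ) * (v A a * v A b) := by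
    intro a b
    simp [hS, Matrix.sum_apply]
  have hdiag : ∀ j : V, Shat (some j) (some j) =
      ((∑ A ∈ Finset.univ.filter (fun A : Finset V => j ∈ A), m A : ℕ) : ℝ) := by
    intro j
    rw [hentry]
    rw [← Finset.sum_filter_add_sum_filter_not Finset.univ (fun A : Finset V => j ∈ A)
      (fun A => (m A : ℝ) * (v A (some j) * v A (some j)))]
    have h1 : ∀ A ∈ Finset.univ.filter (fun A : Finset V => j ∈ A),
        (m A : ℝ) * (v A (some j) * v A (some j)) = (m A : ℝ) := by
      intro A hA
      simp only [Finset.mem_filter] at hA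
      simp [hv, hA.2]
    have h2 : ∀ A ∈ Finset.univ.filter (fun A : Finset V => ¬ j ∈ A),
        (m A : ℝ) * (v A (some j) * v A (some j)) = 0 := by
      intro A hA
      simp only [Finset.mem_filter] at hA
      simp [hv, hA.2]
    rw [Finset.sum_congr rfl h1, Finset.sum_congr rfl h2]
    push_cast
    simp
  refine ⟨?_, ?_, ?_, ?_, ?_⟩
  · rw [Matrix.posSemidef_iff_dotProduct_mulVec]
    constructor
    · -- Hermitian
      ext a b
      simp [Matrix.IsHermitian, hS, Matrix.conjTranspose_apply, Matrix.sum_apply, mul_comm]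
    · intro x
      have key : star x ⬝ᵥ Shat *ᵥ x =
          ∑ A : Finset V, (m A : ℝ) * (∑ a, v A a * x a) ^ 2 := by
        simp only [dotProduct, Matrix.mulVec, hentry, star_trivial,
          Finset.sum_mul, Finset.mul_sum]
        have swap1 : ∀ a : Option V,
            (∑ b : Option V, ∑ A : Finset V, x a * ((m A : ℝ) * (v A a * v A b) * x b))
              = ∑ A : Finset V, ∑ b : Option V, x a * ((m A : ℝ) * (v A a * v A b) * x b) :=
          fun a => Finset.sum_comm
        rw [Finset.sum_congr rfl fun a _ => swap1 a]
        rw [Finset.sum_comm]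
        refine Finset.sum_congr rfl fun A _ => ?_
        rw [sq, Finset.sum_mul_sum, Finset.mul_sum]
        refine Finset.sum_congr rfl fun a _ => ?_
        rw [Finset.mul_sum]
        refine Finset.sum_congr rfl fun b _ => ?_
        ring
      rw [key]
      positivity
  · rw [hentry]
    push_cast
    simp [hv0]
  · intro j
    rw [hentry]
    rw [← Finset.sum_filter_add_sum_filter_not Finset.univ (fun A : Finset V => j ∈ A)
      (fun A => (m A : ℝ) * (v A none * v A (some j)))]
    have h1 : ∀ A ∈ Finset.univ.filter (fun A : Finset V => j ∈ A),
        (m A : ℝ) * (v A none * v A (some j)) = -(m A : ℝ) := by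
      intro A hA
      simp only [Finset.mem_filter] at hA
      simp [hv, hv0, hA.2]
    have h2 : ∀ A ∈ Finset.univ.filter (fun A : Finset V => ¬ j ∈ A),
        (m A : ℝ) * (v A none * v A (some j)) = 0 := by
      intro A hA
      simp only [Finset.mem_filter] at hA
      simp [hv, hA.2]
    rw [Finset.sum_congr rfl h1, Finset.sum_congr rfl h2]
    push_cast
    simp
  · intro j
    refine ⟨hdiag j, ?_⟩
    rw [hdiag j]
    exact_mod_cast hcover j
  · intro i j hij hadj
    rw [hentry]
    apply Finset.sum_eq_zero
    intro A _
    by_cases hm : m A = 0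
    · simp [hm]
    · rcases Decidable.em (i ∈ A) with hi | hi
      · rcases Decidable.em (j ∈ A) with hj | hj
        · exact absurd (hclique A hm (by simpa using hi) (by simpa using hj) hij) hadj
        · simp [hv, hj]
      · simp [hv, hi]
end
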